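/- arXiv:0909.4509 — 2 statements merged into one kernel-verified Lean document; each statement's English description precedes it below -/
import Mathlib

section
/- Let f be analytic on the closed ball B_{≤r1} with r1 > 0 and f(0) ≠ 0, and set r2 = sup{ r : 0 < r ≤ r1 and |f|_r = |f(0)| }. Then r2 > 0, and there exists a unique power series g analytic on the open ball B_{<r2} such that f(z) g(z) = 1 for all z with |z| < r2. -/
open Filter Topology

variable {F : Type*} [NontriviallyNormedField F]

/-- Value of the power series with coefficients `a` at `z`. -/
noncomputable def psEval (a : ℕ → F) (z : F) : F := ∑' n : ℕ, a n * z ^ n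

/-- Value of the Laurent series with coefficients `c` at `z`. -/
noncomputable def lEval (c : ℤ → F) (z : F) : F := ∑' n : ℤ, c n * z ^ n

/-- Gauss norm `|f|_r = sup_n |a_n| r^n` of a power series. -/
noncomputable def pNorm (a : ℕ → F) (r : ℝ) : ℝ := ⨆ n : ℕ, ‖a n‖ * r ^ n

/-- Gauss norm `|f|_r = sup_n |c_n| r^n` of a Laurent series. -/
noncomputable def lNorm (c : ℤ → F) (r : ℝ) : ℝ := ⨆ n : ℤ, ‖c n‖ * r ^ n

/-- The Laurent series `c` is analytic on the annulus `A[r1,r2]`. -/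
def LaurentOn (c : ℤ → F) (r1 r2 : ℝ) : Prop :=
  ∀ r : ℝ, r1 ≤ r → r ≤ r2 → Tendsto (fun n : ℤ => ‖c n‖ * r ^ n) cofinite (nhds 0)

/-- The Laurent series `c` is analytic on `A[r1,∞)`. -/
def LaurentOnInfty (c : ℤ → F) (r1 : ℝ) : Prop :=
  ∀ r : ℝ, r1 ≤ r → Tendsto (fun n : ℤ => ‖c n‖ * r ^ n) cofinite (nhds 0)

/-- The power series `a` is analytic on the closed ball `B_{≤ r}`. -/
def PSOnClosed (a : ℕ → F) (r : ℝ) : Prop :=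
  Tendsto (fun n : ℕ => ‖a n‖ * r ^ n) atTop (nhds 0)

/-- The power series `a` is analytic on the open ball `B_{< R}`. -/
def PSOnOpen (a : ℕ → F) (R : ℝ) : Prop :=
  ∀ r : ℝ, 0 < r → r < R → Tendsto (fun n : ℕ => ‖a n‖ * r ^ n) atTop (nhds 0)

/-- The power series `a` is entire: it converges on all of `F`. -/
def Entire (a : ℕ → F) : Prop :=
  ∀ r : ℝ, 0 < r → Tendsto (fun n : ℕ => ‖a n‖ * r ^ n) atTop (nhds 0)

/-- `k(f,r)` for a Laurent series. -/
noncomputable def kk (c : ℤ → F) (r : ℝ) : ℤ := sInf {n : ℤ | ‖c n‖ * r ^ n = lNorm c r}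

/-- `K(f,r)` for a Laurent series. -/
noncomputable def KK (c : ℤ → F) (r : ℝ) : ℤ := sSup {n : ℤ | ‖c n‖ * r ^ n = lNorm c r}

/-- Product of two Laurent series. -/
noncomputable def laurentMul (c d : ℤ → F) : ℤ → F := fun n => ∑' i : ℤ, c i * d (n - i)

/-- The Laurent series `1`. -/
noncomputable def laurentOne : ℤ → F := fun n => if n = 0 then 1 else 0

/-- Gauss norm of a polynomial. -/
noncomputable def pgNorm (P : Polynomial F) (r : ℝ) : ℝ := ⨆ n : ℕ, ‖P.coeff n‖ * r ^ n

/-- `k(P,r)` for a polynomial. -/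
noncomputable def kP (P : Polynomial F) (r : ℝ) : ℕ :=
  sInf {n : ℕ | ‖P.coeff n‖ * r ^ n = pgNorm P r}

/-- `K(P,r)` for a polynomial. -/
noncomputable def KP (P : Polynomial F) (r : ℝ) : ℕ :=
  sSup {n : ℕ | ‖P.coeff n‖ * r ^ n = pgNorm P r}

/-- A polynomial regarded as a Laurent series. -/
noncomputable def polyToLaurent (P : Polynomial F) : ℤ → F :=
  fun n => if 0 ≤ n then P.coeff n.toNat else 0

/-- `f` vanishes to order exactly `m` at `z0`, as witnessed by a convergent local
power series expansion of `f` about `z0`. -/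
def HasOrderAt (f : F → F) (z0 : F) (m : ℕ) : Prop :=
  ∃ δ > (0 : ℝ), ∃ b : ℕ → F,
    (∀ z : F, ‖z - z0‖ < δ → f z = ∑' n : ℕ, b n * (z - z0) ^ n) ∧
    (∀ j < m, b j = 0) ∧ b m ≠ 0

/-- Order of vanishing at `0` of a power series. -/
noncomputable def ord0 (c : ℕ → F) : ℕ := sInf {n : ℕ | c n ≠ 0}

/-- Radius of convergence of a power series: the sup of the radii `r` such that
the terms `|c_j| r^j` tend to `0`. -/
noncomputable def convRadius (c : ℕ → F) : ENNReal :=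
  ⨆ (r : NNReal) (_ : Tendsto (fun j : ℕ => ‖c j‖ * (r : ℝ) ^ j) atTop (nhds 0)), (r : ENNReal)


/-! A radius `r` lies in the set `{r | |f|_r = |f(0)|}` exactly when `|aₙ| rⁿ ≤ |a₀|` for all `n`;
small radii qualify because `|aₙ| r₁ⁿ` is bounded. For such `r` the recursion for the
coefficients of the formal inverse `g = 1/f` and the ultrametric inequality give
`|gₙ| rⁿ ≤ |a₀|⁻¹`, so `g` converges on `B_{<r}` and the Cauchy product yields `f g = 1` there.
Uniqueness is the identity theorem for power series. -/

open PowerSeries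

lemma summable_mul_pow_of_bound {c : ℕ → ℝ} (hc : ∀ n, 0 ≤ c n) {r s B : ℝ} (hs : 0 ≤ s)
    (hsr : s < r) (hB : ∀ n, c n * r ^ n ≤ B) : Summable fun n => c n * s ^ n := by
  have hr : 0 < r := hs.trans_lt hsr
  have hq : s / r < 1 := (div_lt_one hr).2 hsr
  refine .of_nonneg_of_le (fun n => mul_nonneg (hc n) (pow_nonneg hs n)) (fun n => ?_)
    ((summable_geometric_of_lt_one (by positivity) hq).mul_left B)
  calc c n * s ^ n = c n * r ^ n * (s / r) ^ n := by
        rw [div_pow, mul_assoc, mul_div_cancel₀ _ (pow_ne_zero n hr.ne')]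
    _ ≤ B * (s / r) ^ n := by gcongr; exact hB n

lemma summable_norm_mul_pow_of_bound {b : ℕ → F} {r B : ℝ} (hb : ∀ n, ‖b n‖ * r ^ n ≤ B)
    {z : F} (hz : ‖z‖ < r) : Summable fun n => ‖b n * z ^ n‖ := by
  simpa only [norm_mul, norm_pow] using
    summable_mul_pow_of_bound (fun _ => norm_nonneg _) (norm_nonneg z) hz hb

lemma psEval_zero (a : ℕ → F) : psEval a 0 = a 0 := by
  rw [psEval, tsum_eq_single 0 fun n hn => by simp [zero_pow hn]]
  simp

lemma hasFPowerSeriesAt_psEval [CompleteSpace F] {a : ℕ → F} {R : ℝ} (hR : 0 < R)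
    (ha : PSOnOpen a R) :
    HasFPowerSeriesAt (psEval a) (FormalMultilinearSeries.ofScalars F a) 0 := by
  set p := FormalMultilinearSeries.ofScalars F a
  have hsum : p.sum = psEval a := funext fun z => by
    simp only [p, ← FormalMultilinearSeries.ofScalarsSum.eq_1,
      FormalMultilinearSeries.ofScalars_sum_eq, smul_eq_mul, psEval]
  have hradius : 0 < p.radius := by
    let r : NNReal := ⟨R / 2, (half_pos hR).le⟩
    refine (ENNReal.coe_pos.2 (NNReal.coe_pos.1 (half_pos hR) : 0 < r)).trans_le
      (p.le_radius_of_tendsto (l := 0) ?_)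
    simpa only [p, FormalMultilinearSeries.ofScalars_norm] using
      ha r (half_pos hR) (half_lt_self hR)
  exact hsum ▸ (p.hasFPowerSeriesOnBall hradius).hasFPowerSeriesAt

lemma PSOnOpen.eq_of_psEval_eq [CompleteSpace F] {a b : ℕ → F} {R : ℝ} (hR : 0 < R)
    (ha : PSOnOpen a R) (hb : PSOnOpen b R) (h : ∀ z : F, ‖z‖ < R → psEval a z = psEval b z) :
    a = b := by
  refine FormalMultilinearSeries.ofScalars_series_injective F F <|
    (hasFPowerSeriesAt_psEval hR ha).eq_formalMultilinearSeries_of_eventually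
      (hasFPowerSeriesAt_psEval hR hb) ?_
  filter_upwards [Metric.ball_mem_nhds 0 hR] with z hz
  exact h z (mem_ball_zero_iff.1 hz)

/-- In `ℝ` an unbounded supremum is `0`, so a positive Gauss norm is a genuine supremum. -/
lemma norm_mul_pow_le_pNorm {a : ℕ → F} {r : ℝ} (h : 0 < pNorm a r) (n : ℕ) :
    ‖a n‖ * r ^ n ≤ pNorm a r := by
  have hbdd : BddAbove (Set.range fun n => ‖a n‖ * r ^ n) := by
    by_contra hb
    rw [pNorm, Real.iSup_of_not_bddAbove hb] at h
    exact lt_irrefl 0 h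
  exact le_ciSup hbdd n

lemma pNorm_eq_norm_zero_of_forall_le {a : ℕ → F} {r : ℝ} (h : ∀ n, ‖a n‖ * r ^ n ≤ ‖a 0‖) :
    pNorm a r = ‖a 0‖ :=
  ciSup_eq_of_forall_le_of_forall_lt_exists_gt h fun _ hw => ⟨0, by simpa using hw⟩

lemma PSOnClosed.exists_forall_norm_mul_pow_le {a : ℕ → F} {r₁ : ℝ} (ha : PSOnClosed a r₁)
    (hr₁ : 0 < r₁) (h0 : a 0 ≠ 0) : ∃ r, 0 < r ∧ r ≤ r₁ ∧ ∀ n, ‖a n‖ * r ^ n ≤ ‖a 0‖ := by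
  obtain ⟨C, hC⟩ := ha.bddAbove_range
  have hC : ∀ n, ‖a n‖ * r₁ ^ n ≤ C := fun n => hC ⟨n, rfl⟩
  have ha0 : 0 < ‖a 0‖ := norm_pos_iff.2 h0
  have hCpos : 0 < C := ha0.trans_le (by simpa using hC 0)
  set t := ‖a 0‖ / C
  have ht : t ≤ 1 := (div_le_one hCpos).2 (by simpa using hC 0)
  refine ⟨r₁ * t, by positivity, mul_le_of_le_one_right hr₁.le ht, fun n => ?_⟩
  rcases Nat.eq_zero_or_pos n with rfl | hn
  · simp
  calc ‖a n‖ * (r₁ * t) ^ n = ‖a n‖ * r₁ ^ n * t ^ n := by ring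
    _ ≤ C * t := by gcongr; exacts [hC n, pow_le_of_le_one (by positivity) ht hn.ne']
    _ = ‖a 0‖ := mul_div_cancel₀ _ hCpos.ne'

lemma norm_coeff_inv_mul_pow_le {K : Type*} [NormedField K] [IsUltrametricDist K]
    {φ : PowerSeries K} {r : ℝ} (hr : 0 < r) (hφ : ∀ n, ‖coeff n φ‖ * r ^ n ≤ ‖constantCoeff φ‖)
    (n : ℕ) : ‖coeff n φ⁻¹‖ * r ^ n ≤ ‖constantCoeff φ‖⁻¹ := by
  induction n using Nat.strong_induction_on with
  | _ n ih =>
  rw [coeff_inv]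
  split_ifs with hn
  · simp [hn]
  rw [norm_mul, norm_neg, norm_inv, mul_assoc]
  refine mul_le_of_le_one_right (by positivity) ?_
  rw [← le_div_iff₀ (by positivity), one_div]
  refine IsUltrametricDist.norm_sum_le_of_forall_le_of_nonneg (by positivity) fun x hx => ?_
  split_ifs with hx2
  · rw [← one_div, le_div_iff₀ (by positivity), norm_mul,
      ← Finset.HasAntidiagonal.mem_antidiagonal.1 hx, pow_add]
    calc ‖coeff x.1 φ‖ * ‖coeff x.2 φ⁻¹‖ * (r ^ x.1 * r ^ x.2)
        = (‖coeff x.1 φ‖ * r ^ x.1) * (‖coeff x.2 φ⁻¹‖ * r ^ x.2) := by ring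
      _ ≤ ‖constantCoeff φ‖ * ‖constantCoeff φ‖⁻¹ := by
        gcongr
        exacts [hφ x.1, ih x.2 hx2]
      _ ≤ 1 := mul_inv_le_one
  · simpa using pow_nonneg hr.le n

lemma psEval_mul_psEval [CompleteSpace F] {a b : ℕ → F} {z : F}
    (ha : Summable fun n => ‖a n * z ^ n‖) (hb : Summable fun n => ‖b n * z ^ n‖) :
    psEval a z * psEval b z = psEval (fun n => coeff n (mk a * mk b)) z := by
  rw [psEval, psEval, tsum_mul_tsum_eq_tsum_sum_antidiagonal_of_summable_norm ha hb, psEval]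
  refine tsum_congr fun n => ?_
  rw [coeff_mul, Finset.sum_mul]
  refine Finset.sum_congr rfl fun x hx => ?_
  rw [← Finset.HasAntidiagonal.mem_antidiagonal.1 hx, pow_add, coeff_mk, coeff_mk]
  ring

lemma psEval_coeff_one (z : F) : psEval (fun n => coeff n (1 : PowerSeries F)) z = 1 := by
  rw [psEval, tsum_eq_single 0 fun n hn => by simp [coeff_one, hn]]
  simp

theorem stmt6_general {F : Type*} [NontriviallyNormedField F] [CompleteSpace F]
    (hna : IsNonarchimedean (fun x : F => ‖x‖))
    (r1 : ℝ) (hr1 : 0 < r1)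
    (a : ℕ → F) (ha : PSOnClosed a r1) (h0 : psEval a 0 ≠ 0) :
    0 < sSup {r : ℝ | 0 < r ∧ r ≤ r1 ∧ pNorm a r = ‖psEval a 0‖} ∧
      ∃! g : ℕ → F,
        PSOnOpen g (sSup {r : ℝ | 0 < r ∧ r ≤ r1 ∧ pNorm a r = ‖psEval a 0‖}) ∧
        ∀ z : F, ‖z‖ < sSup {r : ℝ | 0 < r ∧ r ≤ r1 ∧ pNorm a r = ‖psEval a 0‖} →
          psEval a z * psEval g z = 1 := by
  have : IsUltrametricDist F := .isUltrametricDist_of_isNonarchimedean_norm hna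
  rw [psEval_zero] at h0 ⊢
  set S := {r : ℝ | 0 < r ∧ r ≤ r1 ∧ pNorm a r = ‖a 0‖}
  set g : ℕ → F := fun n => coeff n (mk a)⁻¹
  have ha_le : ∀ r ∈ S, ∀ n, ‖a n‖ * r ^ n ≤ ‖a 0‖ := fun r hr n =>
    hr.2.2 ▸ norm_mul_pow_le_pNorm (hr.2.2 ▸ norm_pos_iff.2 h0) n
  have hg_le : ∀ r ∈ S, ∀ n, ‖g n‖ * r ^ n ≤ ‖a 0‖⁻¹ := fun r hr =>
    norm_coeff_inv_mul_pow_le (φ := mk a) hr.1 (by simpa using ha_le r hr)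
  obtain ⟨r₀, hr₀, hr₀r1, hr₀_le⟩ := ha.exists_forall_norm_mul_pow_le hr1 h0
  have hr₀S : r₀ ∈ S := ⟨hr₀, hr₀r1, pNorm_eq_norm_zero_of_forall_le hr₀_le⟩
  have hpos : 0 < sSup S := hr₀.trans_le (le_csSup ⟨r1, fun _ hr => hr.2.1⟩ hr₀S)
  have hag : mk a * mk g = 1 := by
    rw [show mk g = (mk a)⁻¹ from ext fun n => coeff_mk n g]
    exact PowerSeries.mul_inv_cancel _ (by simpa using h0)
  have hg : PSOnOpen g (sSup S) := fun s hs hsS => by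
    obtain ⟨r, hr, hsr⟩ := exists_lt_of_lt_csSup ⟨r₀, hr₀S⟩ hsS
    exact (summable_mul_pow_of_bound (fun _ => norm_nonneg _) hs.le hsr
      (hg_le r hr)).tendsto_atTop_zero
  have hmul : ∀ z : F, ‖z‖ < sSup S → psEval a z * psEval g z = 1 := fun z hz => by
    obtain ⟨r, hr, hzr⟩ := exists_lt_of_lt_csSup ⟨r₀, hr₀S⟩ hz
    rw [psEval_mul_psEval (summable_norm_mul_pow_of_bound (ha_le r hr) hzr)
      (summable_norm_mul_pow_of_bound (hg_le r hr) hzr), hag, psEval_coeff_one]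
  refine ⟨hpos, g, ⟨hg, hmul⟩, fun g' ⟨hg', hmul'⟩ => hg'.eq_of_psEval_eq hpos hg fun z hz => ?_⟩
  exact mul_left_cancel₀ (left_ne_zero_of_mul_eq_one (hmul z hz))
    ((hmul' z hz).trans (hmul z hz).symm)

/-- **Local invertibility.** If `f` is analytic on `B_{≤ r1}` with `r1 > 0` and
`f(0) ≠ 0`, and `r2 = sup { r : 0 < r ≤ r1 ∧ |f|_r = |f(0)| }`, then `r2 > 0` and
there is a unique power series `g` analytic on `B_{< r2}` with `f g = 1` there. -/
theorem stmt6 {F : Type*} [NontriviallyNormedField F] [CompleteSpace F] [IsAlgClosed F]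
    (hna : IsNonarchimedean (fun x : F => ‖x‖))
    (r1 : ℝ) (hr1 : 0 < r1)
    (a : ℕ → F) (ha : PSOnClosed a r1) (h0 : psEval a 0 ≠ 0) :
    0 < sSup {r : ℝ | 0 < r ∧ r ≤ r1 ∧ pNorm a r = ‖psEval a 0‖} ∧
      ∃! g : ℕ → F,
        PSOnOpen g (sSup {r : ℝ | 0 < r ∧ r ≤ r1 ∧ pNorm a r = ‖psEval a 0‖}) ∧
        ∀ z : F, ‖z‖ < sSup {r : ℝ | 0 < r ∧ r ≤ r1 ∧ pNorm a r = ‖psEval a 0‖} →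
          psEval a z * psEval g z = 1 :=
  stmt6_general hna r1 hr1 a ha h0
end

section
/- (Continuity of division.) Let r > 0, let f be a power series analytic on the closed ball B_{≤r}, and let P ∈ F[z] be a nonzero polynomial which is r-dominant, i.e., K(P,r) = deg P. Then there exist a unique power series q analytic on B_{≤r} and a unique polynomial R ∈ F[z] such that (i) f = Pq + R, (ii) deg R < deg P, (iii) |R|_r ≤ |f|_r, and (iv) |q|_r ≤ |f|_r / |P|_r. -/
open Filter Topology

variable {F : Type*} [NontriviallyNormedField F]

/-! If `P` is `r`-dominant of degree `d` and `K` is the last index with `|c_K| r^K = |c|_r`, the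
coefficient of `z^(K+d)` in `P c` has norm exactly `|P|_r |c|_r r^(-(K+d))`. Since `K + d ≥ d`, a
remainder of degree `< d` does not touch it, so `A = P c + R` forces `|P|_r |c|_r ≤ |A|_r` and
`|R|_r ≤ |A|_r`. With `A = 0` this is uniqueness; applied to the Euclidean divisions
`z^n = P Q_n + R_n` it makes `q = ∑ f_n Q_n` and `R = ∑ f_n R_n` converge coefficientwise, with the
required bounds. -/

open Polynomial

variable {r : ℝ}

section GaussNorm

lemma PSOnClosed.le_pNorm {a : ℕ → F} (ha : PSOnClosed a r) (n : ℕ) :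
    ‖a n‖ * r ^ n ≤ pNorm a r :=
  le_ciSup (Tendsto.bddAbove_range ha) n

lemma pNorm_le {a : ℕ → F} {C : ℝ} (h : ∀ n, ‖a n‖ * r ^ n ≤ C) : pNorm a r ≤ C :=
  ciSup_le h

lemma pNorm_nonneg (a : ℕ → F) (hr : 0 ≤ r) : 0 ≤ pNorm a r :=
  Real.iSup_nonneg fun n => by positivity

lemma pNorm_zero (r : ℝ) : pNorm (0 : ℕ → F) r = 0 := by
  simp [pNorm]

lemma pNorm_pos {a : ℕ → F} (hr : 0 < r) (ha : PSOnClosed a r) {n : ℕ} (hn : a n ≠ 0) :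
    0 < pNorm a r :=
  (mul_pos (norm_pos_iff.2 hn) (pow_pos hr n)).trans_le (ha.le_pNorm n)

lemma eq_zero_of_pNorm_nonpos {a : ℕ → F} (hr : 0 < r) (ha : PSOnClosed a r)
    (h : pNorm a r ≤ 0) : a = 0 :=
  funext fun _ => by_contra fun hn => (pNorm_pos hr ha hn).not_ge h

lemma psOnClosed_zero (r : ℝ) : PSOnClosed (0 : ℕ → F) r := by
  simp [PSOnClosed]

lemma PSOnClosed.sub {a b : ℕ → F} (hr : 0 ≤ r) (ha : PSOnClosed a r) (hb : PSOnClosed b r) :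
    PSOnClosed (a - b) r := by
  refine squeeze_zero (fun n => by positivity) (fun n => ?_) (by simpa using ha.add hb)
  rw [← add_mul]
  exact mul_le_mul_of_nonneg_right (norm_sub_le _ _) (by positivity)

lemma PSOnClosed.exists_last_max {a : ℕ → F} (hr : 0 < r) (ha : PSOnClosed a r) (ha0 : a ≠ 0) :
    ∃ K, ‖a K‖ * r ^ K = pNorm a r ∧ ∀ j, K < j → ‖a j‖ * r ^ j < pNorm a r := by
  obtain ⟨n₀, hn₀⟩ := Function.ne_iff.1 ha0
  set g : ℕ → ℝ := fun n => ‖a n‖ * r ^ n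
  have hfin : ∀ {t : ℝ}, 0 < t → {n | t ≤ g n}.Finite := fun ht => by
    have := ha.eventually (gt_mem_nhds ht)
    rw [← Nat.cofinite_eq_atTop, Filter.eventually_cofinite] at this
    simpa using this
  have hpos : 0 < g n₀ := mul_pos (norm_pos_iff.2 hn₀) (pow_pos hr n₀)
  obtain ⟨M, hM, hMmax⟩ := Set.exists_max_image _ g (hfin hpos) ⟨n₀, le_refl (g n₀)⟩
  have hsup : pNorm a r = g M :=
    le_antisymm (pNorm_le fun n => (le_or_gt (g n₀) (g n)).elim (hMmax n)
      fun h => h.le.trans hM) (ha.le_pNorm M)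
  obtain ⟨K, hK, hKmax⟩ := Set.exists_max_image _ id (hfin (hpos.trans_le hM))
    ⟨M, le_refl (g M)⟩
  refine ⟨K, le_antisymm (ha.le_pNorm K) (hsup ▸ hK), fun j hj => ?_⟩
  rw [hsup]
  exact lt_of_not_ge fun h => hj.not_ge (hKmax j h)

lemma pgNorm_eq_pNorm (Q : F[X]) (r : ℝ) : pgNorm Q r = pNorm Q.coeff r := rfl

lemma psOnClosed_coeff (Q : F[X]) (r : ℝ) : PSOnClosed Q.coeff r :=
  tendsto_const_nhds.congr' <| by
    filter_upwards [eventually_gt_atTop Q.natDegree] with n hn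
    simp [coeff_eq_zero_of_natDegree_lt hn]

lemma pgNorm_pos {P : F[X]} (hr : 0 < r) (hP : P ≠ 0) : 0 < pgNorm P r :=
  pNorm_pos hr (psOnClosed_coeff P r) (mt leadingCoeff_eq_zero.1 hP)

lemma pgNorm_X_pow (hr : 0 ≤ r) (n : ℕ) : pgNorm (X ^ n : F[X]) r = r ^ n := by
  refine le_antisymm (pNorm_le fun m => ?_) ?_
  · rw [coeff_X_pow]
    split_ifs with h
    · simp [h]
    · simpa using pow_nonneg hr n
  · simpa [pgNorm_eq_pNorm] using (psOnClosed_coeff (X ^ n : F[X]) r).le_pNorm n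

lemma norm_leadingCoeff_mul_pow_of_dominant {P : F[X]} (hr : 0 < r) (hP : P ≠ 0)
    (hdom : KP P r = P.natDegree) :
    ‖P.leadingCoeff‖ * r ^ P.natDegree = pgNorm P r := by
  obtain ⟨K, hK, hlast⟩ := (psOnClosed_coeff P r).exists_last_max hr
    (fun h => hP (Polynomial.ext (congrFun h)))
  have hKP : KP P r = K :=
    IsGreatest.csSup_eq ⟨hK, fun j hj => le_of_not_gt fun h => (hlast j h).ne hj⟩
  rw [leadingCoeff, ← hdom, hKP]
  exact hK

end GaussNorm

section PolyMul

noncomputable def polyMul (P : F[X]) (c : ℕ → F) (n : ℕ) : F :=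
  ∑ i ∈ Finset.range (n + 1), P.coeff i * c (n - i)

lemma coeff_mul_eq_polyMul (P Q : F[X]) (n : ℕ) : (P * Q).coeff n = polyMul P Q.coeff n := by
  rw [coeff_mul, Finset.Nat.sum_antidiagonal_eq_sum_range_succ_mk]
  rfl

lemma polyMul_sub (P : F[X]) (c c' : ℕ → F) (n : ℕ) :
    polyMul P (c - c') n = polyMul P c n - polyMul P c' n := by
  simp [polyMul, mul_sub, Finset.sum_sub_distrib]

variable [IsUltrametricDist F] {P : F[X]} {c : ℕ → F}

lemma norm_polyMul_mul_pow_le (hr : 0 < r) (P : F[X]) (hc : PSOnClosed c r) (n : ℕ) :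
    ‖polyMul P c n‖ * r ^ n ≤ pgNorm P r * pNorm c r := by
  have hrn := pow_pos hr n
  rw [← le_div_iff₀ hrn]
  refine IsUltrametricDist.norm_sum_le_of_forall_le_of_nonneg
    (div_nonneg (mul_nonneg (pNorm_nonneg _ hr.le) (pNorm_nonneg _ hr.le)) hrn.le) fun i hi => ?_
  rw [le_div_iff₀ hrn, norm_mul, ← pow_mul_pow_sub r (Finset.mem_range_succ_iff.1 hi)]
  calc ‖P.coeff i‖ * ‖c (n - i)‖ * (r ^ i * r ^ (n - i))
      = (‖P.coeff i‖ * r ^ i) * (‖c (n - i)‖ * r ^ (n - i)) := by ring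
    _ ≤ pgNorm P r * pNorm c r :=
      mul_le_mul ((psOnClosed_coeff P r).le_pNorm i) (hc.le_pNorm _) (by positivity)
        (pNorm_nonneg _ hr.le)

/-- With `d = deg P`, in the coefficient of `z^(K + d)` the term `P_d c_K` is strictly larger than
all others: for `i < d` because `K` is the last maximal index of `c`, for `i > d` because
`P_i = 0`. -/
lemma norm_polyMul_mul_pow_of_dominant (hr : 0 < r) (hP : P ≠ 0) (hdom : KP P r = P.natDegree)
    (hc : PSOnClosed c r) (hc0 : c ≠ 0) {K : ℕ} (hK : ‖c K‖ * r ^ K = pNorm c r)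
    (hlast : ∀ j, K < j → ‖c j‖ * r ^ j < pNorm c r) :
    ‖polyMul P c (K + P.natDegree)‖ * r ^ (K + P.natDegree) = pgNorm P r * pNorm c r := by
  set d := P.natDegree
  set n := K + d
  have hrn := pow_pos hr n
  have hPpos := pgNorm_pos hr hP
  have hcpos : 0 < pNorm c r := by
    obtain ⟨m, hm⟩ := Function.ne_iff.1 hc0
    exact pNorm_pos hr hc hm
  have hlead : ‖P.coeff d * c (n - d)‖ * r ^ n = pgNorm P r * pNorm c r := by
    rw [show n - d = K by omega, norm_mul, coeff_natDegree,
      ← norm_leadingCoeff_mul_pow_of_dominant hr hP hdom, ← hK, pow_add]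
    ring
  have hrest : ‖∑ i ∈ (Finset.range (n + 1)).erase d, P.coeff i * c (n - i)‖ * r ^ n
      < pgNorm P r * pNorm c r := by
    rcases ((Finset.range (n + 1)).erase d).eq_empty_or_nonempty with h | h
    · simpa [h] using mul_pos hPpos hcpos
    obtain ⟨i, hi, hle⟩ := IsUltrametricDist.exists_norm_finsetSum_le_of_nonempty h
      fun i => P.coeff i * c (n - i)
    refine (mul_le_mul_of_nonneg_right hle hrn.le).trans_lt ?_
    obtain ⟨hid, hi⟩ := Finset.mem_erase.1 hi
    rcases hid.lt_or_gt with hlt | hgt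
    · rw [norm_mul, ← pow_mul_pow_sub r (Finset.mem_range_succ_iff.1 hi)]
      calc ‖P.coeff i‖ * ‖c (n - i)‖ * (r ^ i * r ^ (n - i))
          = (‖P.coeff i‖ * r ^ i) * (‖c (n - i)‖ * r ^ (n - i)) := by ring
        _ < pgNorm P r * pNorm c r :=
          mul_lt_mul' ((psOnClosed_coeff P r).le_pNorm i) (hlast _ (by omega)) (by positivity)
            hPpos
    · simpa [coeff_eq_zero_of_natDegree_lt hgt] using mul_pos hPpos hcpos
  have hlt : ‖∑ i ∈ (Finset.range (n + 1)).erase d, P.coeff i * c (n - i)‖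
      < ‖P.coeff d * c (n - d)‖ :=
    lt_of_mul_lt_mul_right (hlead ▸ hrest) hrn.le
  rw [polyMul, ← Finset.add_sum_erase _ _ (Finset.mem_range.2 (by omega : d < n + 1)),
    IsUltrametricDist.norm_add_eq_max_of_norm_ne_norm hlt.ne', max_eq_left hlt.le, hlead]

variable {A : ℕ → F} {R : F[X]}

lemma mul_pNorm_le_of_eq_polyMul_add (hr : 0 < r) (hP : P ≠ 0) (hdom : KP P r = P.natDegree)
    (hA : PSOnClosed A r) (hc : PSOnClosed c r) (hR : R.degree < P.degree)
    (h : ∀ n, A n = polyMul P c n + R.coeff n) :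
    pgNorm P r * pNorm c r ≤ pNorm A r := by
  rcases eq_or_ne c 0 with rfl | hc0
  · simpa [pNorm_zero] using pNorm_nonneg A hr.le
  obtain ⟨K, hK, hlast⟩ := hc.exists_last_max hr hc0
  have hRK : R.coeff (K + P.natDegree) = 0 :=
    coeff_eq_zero_of_degree_lt <| hR.trans_le <| by
      rw [degree_eq_natDegree hP]
      exact_mod_cast Nat.le_add_left _ _
  calc pgNorm P r * pNorm c r = ‖A (K + P.natDegree)‖ * r ^ (K + P.natDegree) := by
        rw [h, hRK, add_zero, norm_polyMul_mul_pow_of_dominant hr hP hdom hc hc0 hK hlast]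
    _ ≤ pNorm A r := hA.le_pNorm _

lemma pgNorm_le_of_eq_polyMul_add (hr : 0 < r) (hP : P ≠ 0) (hdom : KP P r = P.natDegree)
    (hA : PSOnClosed A r) (hc : PSOnClosed c r) (hR : R.degree < P.degree)
    (h : ∀ n, A n = polyMul P c n + R.coeff n) :
    pgNorm R r ≤ pNorm A r := by
  refine pNorm_le fun n => ?_
  calc ‖R.coeff n‖ * r ^ n = ‖A n + -polyMul P c n‖ * r ^ n := by rw [h]; ring_nf
    _ ≤ max ‖A n‖ ‖polyMul P c n‖ * r ^ n := by
      grw [IsUltrametricDist.norm_add_le_max, norm_neg]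
    _ = max (‖A n‖ * r ^ n) (‖polyMul P c n‖ * r ^ n) := max_mul_of_nonneg _ _ (by positivity)
    _ ≤ pNorm A r := max_le (hA.le_pNorm n) ((norm_polyMul_mul_pow_le hr P hc n).trans
      (mul_pNorm_le_of_eq_polyMul_add hr hP hdom hA hc hR h))

lemma eq_of_polyMul_add_eq (hr : 0 < r) (hP : P ≠ 0) (hdom : KP P r = P.natDegree)
    {c' : ℕ → F} {R' : F[X]} (hc : PSOnClosed c r) (hc' : PSOnClosed c' r) (hR : R.degree < P.degree) (hR' : R'.degree < P.degree)
    (h : ∀ n, polyMul P c n + R.coeff n = polyMul P c' n + R'.coeff n) : c = c' ∧ R = R' := by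
  have hcc' := hc.sub hr.le hc'
  have hle := mul_pNorm_le_of_eq_polyMul_add hr hP hdom (psOnClosed_zero r) hcc'
    ((degree_sub_le R R').trans_lt (max_lt hR hR')) fun n => by
      rw [polyMul_sub, coeff_sub, Pi.zero_apply]
      linear_combination -h n
  rw [pNorm_zero, ← mul_zero (pgNorm P r)] at hle
  have hcc'0 := eq_zero_of_pNorm_nonpos hr hcc' (le_of_mul_le_mul_left hle (pgNorm_pos hr hP))
  obtain rfl : c = c' := sub_eq_zero.1 hcc'0
  exact ⟨rfl, Polynomial.ext fun n => add_left_cancel (h n)⟩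

end PolyMul

section SeriesDivision

variable {P : F[X]} {f : ℕ → F}

noncomputable def seriesDiv (P : F[X]) (f : ℕ → F) (m : ℕ) : F :=
  ∑' n, f n * (X ^ n / P).coeff m

noncomputable def seriesMod (P : F[X]) (f : ℕ → F) : F[X] :=
  ∑ m ∈ Finset.range P.natDegree, monomial m (∑' n, f n * (X ^ n % P).coeff m)

lemma coeff_seriesMod (hP : P ≠ 0) (m : ℕ) :
    (seriesMod P f).coeff m = ∑' n, f n * (X ^ n % P).coeff m := by
  simp only [seriesMod, finsetSum_coeff, coeff_monomial, Finset.sum_ite_eq', Finset.mem_range]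
  split_ifs with hm
  · rfl
  · have hdeg : ∀ n, (X ^ n % P).degree < (m : WithBot ℕ) := fun n =>
      (degree_mod_lt _ hP).trans_le <| by
        rw [degree_eq_natDegree hP]
        exact_mod_cast not_lt.1 hm
    simp [coeff_eq_zero_of_degree_lt (hdeg _)]

lemma degree_seriesMod_lt (hP : P ≠ 0) : (seriesMod P f).degree < P.degree := by
  rw [degree_eq_natDegree hP, degree_lt_iff_coeff_zero]
  intro m hm
  simp [seriesMod, coeff_monomial, Finset.sum_ite_eq', hm]

variable [IsUltrametricDist F]

lemma mul_pgNorm_X_pow_div_le (hr : 0 < r) (hP : P ≠ 0) (hdom : KP P r = P.natDegree) (n : ℕ) :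
    pgNorm P r * pgNorm (X ^ n / P) r ≤ r ^ n := by
  rw [← pgNorm_X_pow (F := F) hr.le n]
  exact mul_pNorm_le_of_eq_polyMul_add hr hP hdom (psOnClosed_coeff _ r) (psOnClosed_coeff _ r)
    (degree_mod_lt _ hP) fun m => by
      rw [← coeff_mul_eq_polyMul, ← coeff_add, EuclideanDomain.div_add_mod]

lemma pgNorm_X_pow_mod_le (hr : 0 < r) (hP : P ≠ 0) (hdom : KP P r = P.natDegree) (n : ℕ) :
    pgNorm (X ^ n % P) r ≤ r ^ n := by
  rw [← pgNorm_X_pow (F := F) hr.le n]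
  exact pgNorm_le_of_eq_polyMul_add hr hP hdom (psOnClosed_coeff _ r) (psOnClosed_coeff _ r)
    (degree_mod_lt _ hP) fun m => by
      rw [← coeff_mul_eq_polyMul, ← coeff_add, EuclideanDomain.div_add_mod]

lemma norm_coeff_X_pow_div_mul_pow_le (hr : 0 < r) (hP : P ≠ 0) (hdom : KP P r = P.natDegree)
    (n m : ℕ) : ‖(X ^ n / P).coeff m‖ * r ^ m ≤ (pgNorm P r)⁻¹ * r ^ n := by
  have hPpos := pgNorm_pos hr hP
  rw [inv_mul_eq_div, le_div_iff₀ hPpos, mul_comm]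
  exact (mul_le_mul_of_nonneg_left ((psOnClosed_coeff _ r).le_pNorm m) hPpos.le).trans
    (mul_pgNorm_X_pow_div_le hr hP hdom n)

lemma norm_coeff_X_pow_mod_mul_pow_le (hr : 0 < r) (hP : P ≠ 0) (hdom : KP P r = P.natDegree)
    (n m : ℕ) : ‖(X ^ n % P).coeff m‖ * r ^ m ≤ r ^ n :=
  ((psOnClosed_coeff _ r).le_pNorm m).trans (pgNorm_X_pow_mod_le hr hP hdom n)

lemma norm_tsum_mul_mul_pow_le (hr : 0 < r) {f u : ℕ → F} {B C : ℝ} {m : ℕ} (hB : 0 ≤ B)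
    (hC : 0 ≤ C) (hu : ∀ n, ‖u n‖ * r ^ m ≤ B * r ^ n)
    (hf : ∀ n, u n ≠ 0 → ‖f n‖ * r ^ n ≤ C) :
    ‖∑' n, f n * u n‖ * r ^ m ≤ B * C := by
  have hrm := pow_pos hr m
  rw [← le_div_iff₀ hrm]
  refine IsUltrametricDist.norm_tsum_le_of_forall_le_of_nonneg (by positivity) fun n => ?_
  rcases eq_or_ne (u n) 0 with hun | hun
  · simpa [hun] using by positivity
  rw [le_div_iff₀ hrm, norm_mul]
  calc ‖f n‖ * ‖u n‖ * r ^ m = ‖f n‖ * (‖u n‖ * r ^ m) := by ring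
    _ ≤ ‖f n‖ * (B * r ^ n) := mul_le_mul_of_nonneg_left (hu n) (norm_nonneg _)
    _ = B * (‖f n‖ * r ^ n) := by ring
    _ ≤ B * C := by gcongr; exact hf n hun

lemma pgNorm_seriesMod_le (hr : 0 < r) (hP : P ≠ 0) (hdom : KP P r = P.natDegree)
    (hf : PSOnClosed f r) : pgNorm (seriesMod P f) r ≤ pNorm f r :=
  pNorm_le fun m => by
    simpa [coeff_seriesMod hP] using norm_tsum_mul_mul_pow_le hr zero_le_one
      (pNorm_nonneg f hr.le)
      (fun n => (norm_coeff_X_pow_mod_mul_pow_le hr hP hdom n m).trans_eq (one_mul _).symm)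
      fun n _ => hf.le_pNorm n

lemma pNorm_seriesDiv_le (hr : 0 < r) (hP : P ≠ 0) (hdom : KP P r = P.natDegree)
    (hf : PSOnClosed f r) : pNorm (seriesDiv P f) r ≤ pNorm f r / pgNorm P r :=
  pNorm_le fun m => by
    simpa [seriesDiv, div_eq_inv_mul] using norm_tsum_mul_mul_pow_le hr
      (inv_nonneg.2 (pgNorm_pos hr hP).le) (pNorm_nonneg f hr.le)
      (norm_coeff_X_pow_div_mul_pow_le hr hP hdom · m) fun n _ => hf.le_pNorm n

/-- The `m`-th coefficient of the quotient only involves `f_n` with `n ≥ m`, since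
`deg (z^n / P) ≤ n`; this makes it tend to `0`. -/
lemma psOnClosed_seriesDiv (hr : 0 < r) (hP : P ≠ 0) (hdom : KP P r = P.natDegree)
    (hf : PSOnClosed f r) : PSOnClosed (seriesDiv P f) r := by
  have hPpos := pgNorm_pos hr hP
  refine tendsto_order.2 ⟨fun a ha => Eventually.of_forall fun m => ha.trans_le (by positivity),
    fun ε hε => ?_⟩
  have hε' : 0 < ε * pgNorm P r / 2 := by positivity
  obtain ⟨N, hN⟩ := eventually_atTop.1 (hf.eventually (gt_mem_nhds hε'))
  filter_upwards [eventually_ge_atTop N] with m hm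
  have hsmall : ∀ n, (X ^ n / P : F[X]).coeff m ≠ 0 → ‖f n‖ * r ^ n ≤ ε * pgNorm P r / 2 := by
    intro n hn
    have hmn : (m : WithBot ℕ) ≤ n :=
      (le_degree_of_ne_zero hn).trans ((degree_div_le _ _).trans (degree_X_pow_le n))
    exact (hN n (hm.trans (by exact_mod_cast hmn))).le
  calc ‖seriesDiv P f m‖ * r ^ m ≤ (pgNorm P r)⁻¹ * (ε * pgNorm P r / 2) :=
        norm_tsum_mul_mul_pow_le hr (inv_nonneg.2 hPpos.le) hε'.le
          (norm_coeff_X_pow_div_mul_pow_le hr hP hdom · m) hsmall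
    _ < ε := by
      rw [inv_mul_eq_div, div_lt_iff₀ hPpos]
      linarith [mul_pos hε hPpos]

variable [CompleteSpace F]

lemma PSOnClosed.summable_mul (hr : 0 < r) {f u : ℕ → F} {B : ℝ} {m : ℕ} (hf : PSOnClosed f r)
    (hu : ∀ n, ‖u n‖ * r ^ m ≤ B * r ^ n) : Summable fun n => f n * u n := by
  have hrm := pow_pos hr m
  refine NonarchimedeanAddGroup.summable_of_tendsto_cofinite_zero ?_
  rw [Nat.cofinite_eq_atTop]
  refine squeeze_zero_norm (fun n => ?_) (by simpa using hf.const_mul (B / r ^ m))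
  rw [norm_mul, div_mul_eq_mul_div, le_div_iff₀ hrm]
  calc ‖f n‖ * ‖u n‖ * r ^ m = ‖f n‖ * (‖u n‖ * r ^ m) := by ring
    _ ≤ ‖f n‖ * (B * r ^ n) := mul_le_mul_of_nonneg_left (hu n) (norm_nonneg _)
    _ = B * (‖f n‖ * r ^ n) := by ring

lemma eq_polyMul_seriesDiv_add_seriesMod (hr : 0 < r) (hP : P ≠ 0)
    (hdom : KP P r = P.natDegree) (hf : PSOnClosed f r) (m : ℕ) :
    f m = polyMul P (seriesDiv P f) m + (seriesMod P f).coeff m := by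
  have hdiv : ∀ k, Summable fun n => f n * (X ^ n / P).coeff k := fun k =>
    hf.summable_mul hr (norm_coeff_X_pow_div_mul_pow_le hr hP hdom · k)
  have hmod : Summable fun n => f n * (X ^ n % P).coeff m :=
    hf.summable_mul hr fun n =>
      (norm_coeff_X_pow_mod_mul_pow_le hr hP hdom n m).trans_eq (one_mul _).symm
  have hsplit : ∀ n, f n * (X ^ n : F[X]).coeff m = ∑ i ∈ Finset.range (m + 1),
      P.coeff i * (f n * (X ^ n / P).coeff (m - i)) + f n * (X ^ n % P).coeff m := by
    intro n
    rw [← congrArg (coeff · m) (EuclideanDomain.div_add_mod (X ^ n) P), coeff_add,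
      coeff_mul_eq_polyMul, polyMul, mul_add, Finset.mul_sum]
    ring_nf
  calc f m = ∑' n, f n * (X ^ n : F[X]).coeff m := by simp [coeff_X_pow]
    _ = _ := by
      rw [tsum_congr hsplit, Summable.tsum_add (summable_sum fun i _ => (hdiv _).mul_left _) hmod,
        Summable.tsum_finsetSum fun i _ => (hdiv _).mul_left _, coeff_seriesMod hP]
      simp only [tsum_mul_left]
      rfl

end SeriesDivision

theorem stmt11_general {F : Type*} [NontriviallyNormedField F] [CompleteSpace F]
    (hna : IsNonarchimedean (fun x : F => ‖x‖))
    (r : ℝ) (hr : 0 < r)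
    (f : ℕ → F) (hf : PSOnClosed f r)
    (P : Polynomial F) (hP : P ≠ 0) (hdom : KP P r = P.natDegree) :
    ∃! qR : (ℕ → F) × Polynomial F,
      PSOnClosed qR.1 r ∧
      (∀ n : ℕ, f n = (∑ i ∈ Finset.range (n + 1), P.coeff i * qR.1 (n - i)) + qR.2.coeff n) ∧
      qR.2.degree < P.degree ∧
      pgNorm qR.2 r ≤ pNorm f r ∧
      pNorm qR.1 r ≤ pNorm f r / pgNorm P r := by
  have : IsUltrametricDist F := .isUltrametricDist_of_isNonarchimedean_norm hna
  have hq := psOnClosed_seriesDiv hr hP hdom hf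
  have hfqR := eq_polyMul_seriesDiv_add_seriesMod hr hP hdom hf
  refine ⟨(seriesDiv P f, seriesMod P f), ⟨hq, hfqR, degree_seriesMod_lt hP,
    pgNorm_seriesMod_le hr hP hdom hf, pNorm_seriesDiv_le hr hP hdom hf⟩, ?_⟩
  rintro ⟨q', R'⟩ ⟨hq', hfqR', hR', -, -⟩
  obtain ⟨rfl, rfl⟩ := eq_of_polyMul_add_eq hr hP hdom hq' hq hR' (degree_seriesMod_lt hP)
    fun n => (hfqR' n).symm.trans (hfqR n)
  rfl

/-- **Continuity of division.** If `f` is analytic on `B_{≤r}` and `P ≠ 0` is an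
`r`-dominant polynomial (`K(P,r) = deg P`), then there are a unique power series `q`
analytic on `B_{≤r}` and a unique polynomial `R` with `f = Pq + R`, `deg R < deg P`,
`|R|_r ≤ |f|_r`, and `|q|_r ≤ |f|_r / |P|_r`. -/
theorem stmt11 {F : Type*} [NontriviallyNormedField F] [CompleteSpace F] [IsAlgClosed F]
    (hna : IsNonarchimedean (fun x : F => ‖x‖))
    (r : ℝ) (hr : 0 < r)
    (f : ℕ → F) (hf : PSOnClosed f r)
    (P : Polynomial F) (hP : P ≠ 0) (hdom : KP P r = P.natDegree) :
    ∃! qR : (ℕ → F) × Polynomial F,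
      PSOnClosed qR.1 r ∧
      (∀ n : ℕ, f n = (∑ i ∈ Finset.range (n + 1), P.coeff i * qR.1 (n - i)) + qR.2.coeff n) ∧
      qR.2.degree < P.degree ∧
      pgNorm qR.2 r ≤ pNorm f r ∧
      pNorm qR.1 r ≤ pNorm f r / pgNorm P r :=
  stmt11_general hna r hr f hf P hP hdom
end
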